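/- arXiv:2111.14011 — 3 statements merged into one kernel-verified Lean document; each statement's English description precedes it below -/
import Mathlib

section
/- If μ is a Beltrami coefficient on the upper half-plane with ∫_U |μ(z)|^p / y² dxdy < ∞ for some p ≥ 1, then the measure λ_μ with dλ_μ = |μ(z)|² y^{-1} dxdy is a vanishing Carleson measure: λ_μ(I × (0,|I|])/|I| → 0 uniformly as |I| → 0. -/
/-!
Write `L = b - a` and `u = ‖μ z‖ ≤ 1`, and fix `t > 0`. At a point of the Carleson box with
`u ^ p ≤ t ^ (p / 2) * y / L` we have `u² / y ≤ t L^(-2/p) y^(2/p - 1)`, whose integral over the box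
is `L * (t p / 2)`; at the other points `u² / y ≤ 1 / y < (L / t ^ (p / 2)) * u ^ p / y²`. Hence the
Carleson average is at most `t^(-p/2) ∫_box ‖μ‖^p / y² + t p / 2`. Choose `t` to make the second
term small; the first one then tends to zero with `L` by absolute continuity of the integral.
-/

open MeasureTheory Set

/-- The upper half-plane as a subset of ℂ. -/
noncomputable def UHP : Set ℂ := {z : ℂ | 0 < z.im}

open Filter Topology Complex
open scoped ENNReal

namespace Complex

variable {E : Type*} [NormedAddCommGroup E] {s t : Set ℝ}

lemma integrableOn_reProdIm_iff {f : ℂ → E} :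
    IntegrableOn f (s ×ℂ t) ↔
      Integrable (fun p : ℝ × ℝ => f (p.1 + p.2 * I))
        ((volume.restrict s).prod (volume.restrict t)) := by
  rw [Measure.prod_restrict, ← Measure.volume_eq_prod, ← IntegrableOn,
    ← (volume_preserving_equiv_real_prod.symm).integrableOn_comp_preimage
      measurableEquivRealProd.symm.measurableEmbedding]
  simp only [Function.comp_def, measurableEquivRealProd_symm_apply, ← mk_eq_add_mul_I]
  rfl

lemma setIntegral_reProdIm [NormedSpace ℝ E] [CompleteSpace E] {f : ℂ → E}
    (hf : IntegrableOn f (s ×ℂ t)) :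
    ∫ z in s ×ℂ t, f z = ∫ y in t, ∫ x in s, f (x + y * I) := by
  rw [← integral_prod_symm _ (integrableOn_reProdIm_iff.1 hf), Measure.prod_restrict,
    ← Measure.volume_eq_prod,
    ← (volume_preserving_equiv_real_prod.symm).setIntegral_preimage_emb
      measurableEquivRealProd.symm.measurableEmbedding]
  simp only [measurableEquivRealProd_symm_apply, ← mk_eq_add_mul_I]
  rfl

lemma volume_reProdIm : volume (s ×ℂ t) = volume s * volume t := by
  rw [← (volume_preserving_equiv_real_prod.symm).measure_preimage_equiv, Measure.volume_eq_prod]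
  exact Measure.prod_prod s t

lemma integral_integral_le_of_le_mul_add {F : ℝ → ℝ → ℝ} {g : ℂ → ℝ} {B : ℝ → ℝ} {C : ℝ}
    (hs : MeasurableSet s) (hs' : volume s ≠ ∞) (ht : MeasurableSet t)
    (hg : IntegrableOn g (s ×ℂ t)) (hB : IntegrableOn B t)
    (hF0 : ∀ x ∈ s, ∀ y ∈ t, 0 ≤ F x y)
    (hFle : ∀ x ∈ s, ∀ y ∈ t, F x y ≤ C * g (x + y * I) + B y) :
    ∫ y in t, ∫ x in s, F x y ≤ C * (∫ z in s ×ℂ t, g z) + volume.real s * ∫ y in t, B y := by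
  have hG := integrableOn_reProdIm_iff.1 hg
  have hGy : Integrable (fun y : ℝ => ∫ x in s, g (x + y * I)) (volume.restrict t) :=
    hG.integral_prod_right
  have hinner : ∀ᵐ y ∂volume.restrict t,
      ∫ x in s, F x y ≤ C * (∫ x in s, g (x + y * I)) + volume.real s * B y := by
    filter_upwards [hG.prod_left_ae, ae_restrict_mem ht] with y hgy hy
    calc ∫ x in s, F x y ≤ ∫ x in s, (C * g (x + y * I) + B y) :=
          integral_mono_of_nonneg
            ((ae_restrict_iff' hs).2 (.of_forall fun x hx => hF0 x hx y hy))
            ((hgy.const_mul C).add (integrableOn_const hs'))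
            ((ae_restrict_iff' hs).2 (.of_forall fun x hx => hFle x hx y hy))
      _ = C * (∫ x in s, g (x + y * I)) + volume.real s * B y := by
          rw [integral_add (hgy.const_mul C) (integrableOn_const hs'), integral_const_mul,
            setIntegral_const, smul_eq_mul]
  calc ∫ y in t, ∫ x in s, F x y
      ≤ ∫ y in t, (C * (∫ x in s, g (x + y * I)) + volume.real s * B y) :=
        integral_mono_of_nonneg
          ((ae_restrict_iff' ht).2 (.of_forall fun y hy =>
            setIntegral_nonneg hs fun x hx => hF0 x hx y hy))
          ((hGy.const_mul C).add (hB.const_mul (volume.real s))) hinner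
    _ = C * (∫ z in s ×ℂ t, g z) + volume.real s * ∫ y in t, B y := by
        rw [integral_add (hGy.const_mul C) (hB.const_mul (volume.real s)), integral_const_mul,
          integral_const_mul, setIntegral_reProdIm hg]

end Complex

def carlesonBox (a b : ℝ) : Set ℂ := Icc a b ×ℂ Ioc 0 (b - a)

lemma carlesonBox_subset_UHP (a b : ℝ) : carlesonBox a b ⊆ UHP := fun _ hz => hz.2.1

lemma volume_carlesonBox (a b : ℝ) :
    volume (carlesonBox a b) = ENNReal.ofReal (b - a) * ENNReal.ofReal (b - a) := by
  rw [carlesonBox, volume_reProdIm, Real.volume_Icc, Real.volume_Ioc, sub_zero]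

lemma MeasureTheory.IntegrableOn.exists_forall_setIntegral_carlesonBox_le {g : ℂ → ℝ}
    (hg : IntegrableOn g UHP) {ε : ℝ} (hε : 0 < ε) :
    ∃ δ > 0, ∀ a b : ℝ, a < b → b - a < δ → ∫ z in carlesonBox a b, g z ≤ ε := by
  have hvol : Tendsto (fun ab : ℝ × ℝ => volume.restrict UHP (carlesonBox ab.1 ab.2))
      (comap (fun ab => ab.2 - ab.1) (𝓝 0)) (𝓝 0) := by
    have hd : Tendsto (fun ab : ℝ × ℝ => ENNReal.ofReal (ab.2 - ab.1))
        (comap (fun ab => ab.2 - ab.1) (𝓝 0)) (𝓝 0) := by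
      simpa using
        ENNReal.tendsto_ofReal (tendsto_comap (f := fun ab : ℝ × ℝ => ab.2 - ab.1) (x := 𝓝 0))
    refine tendsto_of_tendsto_of_tendsto_of_le_of_le tendsto_const_nhds
      (by simpa using
        ENNReal.Tendsto.mul hd (.inr ENNReal.zero_ne_top) hd (.inr ENNReal.zero_ne_top))
      (fun _ => zero_le) fun ab => ?_
    rw [← volume_carlesonBox]
    exact Measure.restrict_apply_le _ _
  have hsmall := (tendsto_order.1 (hg.tendsto_setIntegral_nhds_zero hvol)).2 ε hε
  rw [eventually_comap, Metric.eventually_nhds_iff] at hsmall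
  obtain ⟨δ, hδ, hsmall⟩ := hsmall
  refine ⟨δ, hδ, fun a b hab hδab => ?_⟩
  have hd : dist (b - a) 0 < δ := by
    rwa [Real.dist_0_eq_abs, abs_of_pos (sub_pos.2 hab)]
  have := hsmall hd (a, b) rfl
  rw [Measure.restrict_restrict_of_subset (carlesonBox_subset_UHP a b)] at this
  exact this.le

lemma sq_div_le_of_le_one {p u y L t : ℝ} (hp : 0 < p) (hu0 : 0 ≤ u) (hu1 : u ≤ 1)
    (hy : 0 < y) (hL : 0 < L) (ht : 0 < t) :
    u ^ 2 / y ≤ L / t ^ (p / 2) * (u ^ p / y ^ 2) + t / L ^ (2 / p) * y ^ (2 / p - 1) := by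
  rcases le_or_gt (u ^ p) (t ^ (p / 2) * y / L) with hsmall | hlarge
  · have hsq : u ^ 2 ≤ t / L ^ (2 / p) * y ^ (2 / p) :=
      calc u ^ 2 = (u ^ p) ^ (2 / p) := by
            rw [← Real.rpow_mul hu0, mul_div_cancel₀ _ hp.ne', Real.rpow_two]
        _ ≤ (t ^ (p / 2) * y / L) ^ (2 / p) := by gcongr
        _ = t / L ^ (2 / p) * y ^ (2 / p) := by
            rw [Real.div_rpow (by positivity) hL.le, Real.mul_rpow (by positivity) hy.le,
              ← Real.rpow_mul ht.le, show p / 2 * (2 / p) = 1 by field_simp, Real.rpow_one]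
            ring
    calc u ^ 2 / y ≤ t / L ^ (2 / p) * y ^ (2 / p) / y := by gcongr
      _ = t / L ^ (2 / p) * y ^ (2 / p - 1) := by rw [Real.rpow_sub_one hy.ne']; ring
      _ ≤ _ := le_add_of_nonneg_left (by positivity)
  · have hu2 : u ^ 2 ≤ 1 := pow_le_one₀ hu0 hu1
    calc u ^ 2 / y ≤ 1 / y := by gcongr
      _ ≤ L / t ^ (p / 2) * (u ^ p / y ^ 2) := by
          rw [div_lt_iff₀ hL] at hlarge
          rw [div_mul_div_comm, div_le_div_iff₀ hy (by positivity)]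
          nlinarith
      _ ≤ _ := le_add_of_nonneg_right (by positivity)

lemma integrableOn_Ioc_rpow_sub_one {r L : ℝ} (hr : 0 < r) (hL : 0 ≤ L) :
    IntegrableOn (fun y : ℝ => y ^ (r - 1)) (Ioc 0 L) :=
  (intervalIntegrable_iff_integrableOn_Ioc_of_le hL).1
    (intervalIntegral.intervalIntegrable_rpow' (by linarith))

lemma setIntegral_Ioc_rpow_sub_one {r L : ℝ} (hr : 0 < r) (hL : 0 ≤ L) :
    ∫ y in Ioc 0 L, y ^ (r - 1) = L ^ r / r := by
  rw [← intervalIntegral.integral_of_le hL, integral_rpow (.inl (by linarith)), sub_add_cancel,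
    Real.zero_rpow hr.ne', sub_zero]

theorem stmt1_general (p : ℝ) (hp : 1 ≤ p) (μ : ℂ → ℂ)
    (k : ℝ) (hk : k < 1) (hbd : ∀ z, ‖μ z‖ ≤ k)
    (hfin : IntegrableOn (fun z => ‖μ z‖ ^ p / z.im ^ 2) UHP volume) :
    ∀ ε > (0 : ℝ), ∃ δ > (0 : ℝ), ∀ a b : ℝ, a < b → b - a < δ →
      (1 / (b - a)) *
          (∫ y in Ioc (0 : ℝ) (b - a), ∫ x in Icc a b,
            ‖μ (x + y * Complex.I)‖ ^ 2 / y)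
        ≤ ε := by
  intro ε hε
  have hp0 : 0 < p := by linarith
  set t := ε / p with ht
  have ht0 : 0 < t := by positivity
  obtain ⟨δ, hδ, hbox⟩ :=
    hfin.exists_forall_setIntegral_carlesonBox_le (ε := t ^ (p / 2) * (ε / 2)) (by positivity)
  refine ⟨δ, hδ, fun a b hab hδab => ?_⟩
  have hL : 0 < b - a := sub_pos.2 hab
  have hdom := integral_integral_le_of_le_mul_add (F := fun x y => ‖μ (x + y * I)‖ ^ 2 / y)
    (C := (b - a) / t ^ (p / 2)) (B := fun y => t / (b - a) ^ (2 / p) * y ^ (2 / p - 1))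
    measurableSet_Icc measure_Icc_lt_top.ne measurableSet_Ioc
    (hfin.mono_set (carlesonBox_subset_UHP a b))
    ((integrableOn_Ioc_rpow_sub_one (by positivity) hL.le).const_mul _)
    (fun _ _ y hy => div_nonneg (by positivity) hy.1.le)
    (fun _ _ y hy => by
      simpa using sq_div_le_of_le_one hp0 (norm_nonneg _) ((hbd _).trans hk.le) hy.1 hL ht0)
  rw [Real.volume_real_Icc_of_le hab.le, integral_const_mul,
    setIntegral_Ioc_rpow_sub_one (by positivity) hL.le] at hdom
  calc (1 / (b - a)) * ∫ y in Ioc (0 : ℝ) (b - a), ∫ x in Icc a b, ‖μ (x + y * I)‖ ^ 2 / y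
      ≤ (1 / (b - a)) * ((b - a) / t ^ (p / 2) * (∫ z in carlesonBox a b, ‖μ z‖ ^ p / z.im ^ 2)
          + (b - a) * (t / (b - a) ^ (2 / p) * ((b - a) ^ (2 / p) / (2 / p)))) :=
        mul_le_mul_of_nonneg_left hdom (by positivity)
    _ = (∫ z in carlesonBox a b, ‖μ z‖ ^ p / z.im ^ 2) / t ^ (p / 2) + ε / 2 := by
        rw [ht]; field_simp
    _ ≤ ε / 2 + ε / 2 := by
        grw [div_le_iff₀ (by positivity) |>.2 ((hbox a b hab hδab).trans_eq (mul_comm _ _))]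
    _ = ε := add_halves ε

/-- If `μ` is a Beltrami coefficient on the upper half-plane with
`∫_U |μ|^p / y² < ∞` for some `p ≥ 1`, then the measure `dλ_μ = |μ(z)|² y⁻¹ dxdy`
is a vanishing Carleson measure: `λ_μ(I × (0,|I|])/|I| → 0` uniformly as `|I| → 0`. -/
theorem stmt1 (p : ℝ) (hp : 1 ≤ p) (μ : ℂ → ℂ) (hmeas : Measurable μ)
    (k : ℝ) (hk : k < 1) (hbd : ∀ z, ‖μ z‖ ≤ k)
    (hfin : IntegrableOn (fun z => ‖μ z‖ ^ p / z.im ^ 2) UHP volume) :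
    ∀ ε > (0 : ℝ), ∃ δ > (0 : ℝ), ∀ a b : ℝ, a < b → b - a < δ →
      (1 / (b - a)) *
          (∫ y in Ioc (0 : ℝ) (b - a), ∫ x in Icc a b,
            ‖μ (x + y * Complex.I)‖ ^ 2 / y)
        ≤ ε :=
  stmt1_general p hp μ k hk hbd hfin
end

section
/- For p = 1, the homogeneous Besov space B_1(ℝ) is trivial: any locally integrable function u on ℝ with ∫∫_{ℝ×ℝ} |u(t) − u(s)| / |t − s|² ds dt < ∞ is (almost everywhere equal to) a constant. -/
open MeasureTheory

/-- The homogeneous `p`-Besov kernel of a function `u : ℝ → ℂ`. -/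
noncomputable def Bker (p : ℝ) (u : ℝ → ℂ) : ℝ × ℝ → ℝ :=
  fun q => ‖u q.1 - u q.2‖ ^ p / |q.1 - q.2| ^ 2

/-!
The averages of `u` over adjacent intervals `[a, b)`, `[b, c)` of length `h` differ by at most
`4 ∫∫_{[a,b)×[b,c)} ‖u t - u s‖ / |t - s|²`, because `|t - s| ≤ 2h` there. Chaining `n` such
intervals from `x` to `y = x + n h` bounds the difference of the averages at `x` and at `y` by
`4` times the Besov integral over the strip `|t - s| ≤ 2h`, which tends to `0` with `h` by
dominated convergence (the kernel vanishes on the diagonal). At Lebesgue points `x`, `y` these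
averages tend to `u x` and `u y`, so `u` is constant on a set of full measure.
-/

open Set Filter Topology Function

theorem average_fst_sub_snd {α β E : Type*} [MeasurableSpace α] [MeasurableSpace β]
    [NormedAddCommGroup E] [NormedSpace ℝ E] {μ : Measure α} {ν : Measure β}
    [IsFiniteMeasure μ] [NeZero μ] [IsFiniteMeasure ν] [NeZero ν] {f : α → E} {g : β → E}
    (hf : Integrable f μ) (hg : Integrable g ν) :
    ⨍ p, (f p.1 - g p.2) ∂(μ.prod ν) = ⨍ x, f x ∂μ - ⨍ y, g y ∂ν := by
  have hμ := measureReal_univ_ne_zero (μ := μ)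
  have hν := measureReal_univ_ne_zero (μ := ν)
  rw [average_eq, integral_sub (hf.comp_fst ν) (hg.comp_snd μ), integral_fun_fst,
    integral_fun_snd, average_eq, average_eq, ← univ_prod_univ, measureReal_prod_prod, smul_sub,
    smul_smul, smul_smul]
  congr 2 <;> field_simp

theorem Bker_one_nonneg (u : ℝ → ℂ) (q : ℝ × ℝ) : 0 ≤ Bker 1 u q := by
  unfold Bker; positivity

theorem norm_sub_le_sq_mul_Bker_one (u : ℝ → ℂ) {q : ℝ × ℝ} {r : ℝ}
    (hq : |q.1 - q.2| ≤ r) : ‖u q.1 - u q.2‖ ≤ r ^ 2 * Bker 1 u q := by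
  rcases eq_or_ne q.1 q.2 with h | h
  · simp [h, Bker]
  · have hpos : 0 < |q.1 - q.2| := abs_pos.mpr (sub_ne_zero.mpr h)
    calc ‖u q.1 - u q.2‖ = |q.1 - q.2| ^ 2 * Bker 1 u q := by
          rw [Bker, Real.rpow_one, mul_div_cancel₀ _ (by positivity)]
      _ ≤ r ^ 2 * Bker 1 u q := by
          gcongr
          exact Bker_one_nonneg u q

theorem dist_setAverage_Ico_Ico_le {u : ℝ → ℂ} (hloc : LocallyIntegrable u)
    (hint : Integrable (Bker 1 u)) {a b c : ℝ} (hab : a < b) (hbc : c - b = b - a) :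
    dist (⨍ t in Ico a b, u t) (⨍ t in Ico b c, u t)
      ≤ 4 * ∫ q in Ico a b ×ˢ Ico b c, Bker 1 u q := by
  have hI : volume.real (Ico a b) = b - a := by simp [measureReal_def, hab.le]
  have hJ : volume.real (Ico b c) = b - a := by simp [measureReal_def, ← hbc]; linarith
  have : NeZero (volume.restrict (Ico a b)) := ⟨by simp [hab]⟩
  have : NeZero (volume.restrict (Ico b c)) := ⟨by simp; linarith⟩
  have hP : volume.real (Ico a b ×ˢ Ico b c) = (b - a) ^ 2 := by
    rw [Measure.volume_eq_prod, measureReal_prod_prod, hI, hJ, sq]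
  have hbound : ∀ q ∈ Ico a b ×ˢ Ico b c,
      ‖u q.1 - u q.2‖ ≤ (2 * (b - a)) ^ 2 * Bker 1 u q := by
    rintro q ⟨⟨h1, h2⟩, h3, h4⟩
    refine norm_sub_le_sq_mul_Bker_one u ?_
    rw [abs_le]; constructor <;> linarith
  have hu (s t : ℝ) : IntegrableOn u (Ico s t) :=
    (hloc.integrableOn_isCompact isCompact_Icc).mono_set Ico_subset_Icc_self
  rw [dist_eq_norm, ← average_fst_sub_snd (hu a b) (hu b c), Measure.prod_restrict,
    ← Measure.volume_eq_prod, setAverage_eq, norm_smul, hP]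
  have hba : 0 < b - a := sub_pos.mpr hab
  calc ‖((b - a) ^ 2)⁻¹‖ * ‖∫ q in Ico a b ×ˢ Ico b c, (u q.1 - u q.2)‖
      ≤ ((b - a) ^ 2)⁻¹ * ∫ q in Ico a b ×ˢ Ico b c, (2 * (b - a)) ^ 2 * Bker 1 u q := by
        rw [Real.norm_of_nonneg (by positivity)]
        gcongr
        exact norm_integral_le_of_norm_le (hint.integrableOn.const_mul _)
          (ae_restrict_of_forall_mem (measurableSet_Ico.prod measurableSet_Ico) hbound)
    _ = 4 * ∫ q in Ico a b ×ˢ Ico b c, Bker 1 u q := by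
        rw [integral_const_mul]; field_simp; ring

def diagonalStrip (ε : ℝ) : Set (ℝ × ℝ) := {q | |q.1 - q.2| ≤ ε}

theorem measurableSet_diagonalStrip (ε : ℝ) : MeasurableSet (diagonalStrip ε) :=
  measurableSet_le (by fun_prop) measurable_const

theorem dist_setAverage_Ico_le_setIntegral_diagonalStrip {u : ℝ → ℂ}
    (hloc : LocallyIntegrable u) (hint : Integrable (Bker 1 u)) {a b h : ℝ} (hh : 0 < h) {n : ℕ}
    (hn : a + n * h = b) :
    dist (⨍ t in Ico a (a + h), u t) (⨍ t in Ico b (b + h), u t)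
      ≤ 4 * ∫ q in diagonalStrip (2 * h), Bker 1 u q := by
  set x : ℕ → ℝ := fun k => a + k * h
  have hx : StrictMono x := fun j k hjk => by simp only [x]; gcongr
  have hstep (k : ℕ) : x (k + 1) = x k + h := by simp only [x]; push_cast; ring
  set I : ℕ → Set ℝ := fun k => Ico (x k) (x (k + 1))
  set v : ℕ → ℂ := fun k => ⨍ t in I k, u t
  have hadj (k : ℕ) : dist (v k) (v (k + 1)) ≤ 4 * ∫ q in I k ×ˢ I (k + 1), Bker 1 u q :=
    dist_setAverage_Ico_Ico_le hloc hint (hx k.lt_succ_self) (by rw [hstep, hstep]; ring)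
  have hdisj : Pairwise (Disjoint on fun k => I k ×ˢ I (k + 1)) :=
    fun j k hjk => (hx.monotone.pairwise_disjoint_on_Ico_succ hjk).set_prod_left _ _
  have hsub : (⋃ k ∈ Finset.range n, I k ×ˢ I (k + 1)) ⊆ diagonalStrip (2 * h) := by
    simp only [iUnion_subset_iff]
    rintro k - q ⟨⟨h1, h2⟩, h3, h4⟩
    simp only [hstep] at h2 h3 h4
    show |q.1 - q.2| ≤ 2 * h
    rw [abs_le]; constructor <;> linarith
  calc dist (⨍ t in Ico a (a + h), u t) (⨍ t in Ico b (b + h), u t) = dist (v 0) (v n) := by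
        simp [v, I, hstep, x, ← hn]
    _ ≤ ∑ k ∈ Finset.range n, dist (v k) (v (k + 1)) := dist_le_range_sum_dist v n
    _ ≤ ∑ k ∈ Finset.range n, 4 * ∫ q in I k ×ˢ I (k + 1), Bker 1 u q :=
        Finset.sum_le_sum fun k _ => hadj k
    _ = 4 * ∫ q in ⋃ k ∈ Finset.range n, I k ×ˢ I (k + 1), Bker 1 u q := by
        rw [← Finset.mul_sum, integral_biUnion_finset _
          (fun k _ => measurableSet_Ico.prod measurableSet_Ico)
          (hdisj.set_pairwise _) (fun k _ => hint.integrableOn)]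
    _ ≤ 4 * ∫ q in diagonalStrip (2 * h), Bker 1 u q := by
        refine mul_le_mul_of_nonneg_left ?_ (by norm_num)
        exact setIntegral_mono_set hint.integrableOn
          (ae_of_all _ (Bker_one_nonneg u)) hsub.eventuallyLE

theorem tendsto_setIntegral_diagonalStrip {u : ℝ → ℂ} (hint : Integrable (Bker 1 u)) :
    Tendsto (fun ε => ∫ q in diagonalStrip ε, Bker 1 u q) (𝓝[>] 0) (𝓝 0) := by
  simp_rw [← integral_indicator (measurableSet_diagonalStrip _)]
  rw [show 𝓝 (0 : ℝ) = 𝓝 (∫ _ : ℝ × ℝ, (0 : ℝ)) by rw [integral_zero]]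
  refine tendsto_integral_filter_of_dominated_convergence (fun q => ‖Bker 1 u q‖)
    (Eventually.of_forall fun ε =>
      hint.aestronglyMeasurable.indicator (measurableSet_diagonalStrip ε))
    (Eventually.of_forall fun ε => ae_of_all _ fun q => norm_indicator_le_norm_self _ _)
    hint.norm (ae_of_all _ fun q => ?_)
  rcases eq_or_ne q.1 q.2 with hq | hq
  · have h0 : Bker 1 u q = 0 := by simp [Bker, hq]
    exact tendsto_const_nhds.congr fun ε => (indicator_apply_eq_zero.mpr fun _ => h0).symm
  · have hpos : 0 < |q.1 - q.2| := abs_pos.mpr (sub_ne_zero.mpr hq)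
    refine tendsto_const_nhds.congr' ?_
    filter_upwards [Ioo_mem_nhdsGT hpos] with ε hε
    exact (indicator_of_notMem
      (fun h : q ∈ diagonalStrip ε => (h.trans_lt hε.2).false) _).symm

theorem ae_tendsto_setAverage_Ico {u : ℝ → ℂ} (hloc : LocallyIntegrable u) :
    ∀ᵐ x, Tendsto (fun h => ⨍ t in Ico x (x + h), u t) (𝓝[>] 0) (𝓝 (u x)) := by
  filter_upwards [IsUnifLocDoublingMeasure.ae_tendsto_average (μ := volume) hloc 1] with x hx
  have hhalf₀ : Tendsto (fun h : ℝ => h / 2) (𝓝 0) (𝓝 0) := by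
    simpa using (tendsto_id (x := 𝓝 (0 : ℝ))).div_const 2
  have hhalf : Tendsto (fun h : ℝ => h / 2) (𝓝[>] 0) (𝓝[>] 0) :=
    tendsto_nhdsWithin_of_tendsto_nhds_of_eventually_within _
      (hhalf₀.mono_left nhdsWithin_le_nhds)
      (eventually_nhdsWithin_of_forall fun h (hh : 0 < h) => half_pos hh)
  refine (hx (fun h => x + h / 2) (fun h => h / 2) hhalf
    (eventually_nhdsWithin_of_forall fun h (hh : 0 < h) => ?_)).congr fun h => ?_
  · rw [Metric.mem_closedBall, Real.dist_eq, abs_le]; constructor <;> linarith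
  · rw [Real.closedBall_eq_Icc, setAverage_eq, setAverage_eq,
      setIntegral_congr_set Ico_ae_eq_Icc, measureReal_congr Ico_ae_eq_Icc]
    ring_nf

theorem tendsto_const_div_natCast_nhdsGT {c : ℝ} (hc : 0 < c) :
    Tendsto (fun n : ℕ => c / n) atTop (𝓝[>] 0) :=
  tendsto_nhdsWithin_of_tendsto_nhds_of_eventually_within _
    (tendsto_const_div_atTop_nhds_zero_nat c)
    (by filter_upwards [eventually_gt_atTop 0] with n hn using div_pos hc (Nat.cast_pos.2 hn))

theorem eq_of_tendsto_setAverage_Ico {u : ℝ → ℂ} (hloc : LocallyIntegrable u)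
    (hint : Integrable (Bker 1 u)) {x y : ℝ} (hxy : x < y)
    (hx : Tendsto (fun h => ⨍ t in Ico x (x + h), u t) (𝓝[>] 0) (𝓝 (u x)))
    (hy : Tendsto (fun h => ⨍ t in Ico y (y + h), u t) (𝓝[>] 0) (𝓝 (u y))) :
    u x = u y := by
  have hyx : 0 < y - x := sub_pos.mpr hxy
  have hstep := tendsto_const_div_natCast_nhdsGT hyx
  have hstrip : Tendsto (fun n : ℕ => 4 * ∫ q in diagonalStrip (2 * ((y - x) / n)), Bker 1 u q)
      atTop (𝓝 0) := by
    simp_rw [← mul_div_assoc]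
    simpa using ((tendsto_setIntegral_diagonalStrip hint).comp
      (tendsto_const_div_natCast_nhdsGT (mul_pos two_pos hyx))).const_mul 4
  have hchain : ∀ᶠ n : ℕ in atTop,
      dist (⨍ t in Ico x (x + (y - x) / n), u t) (⨍ t in Ico y (y + (y - x) / n), u t)
        ≤ 4 * ∫ q in diagonalStrip (2 * ((y - x) / n)), Bker 1 u q := by
    filter_upwards [eventually_ne_atTop 0] with n hn
    exact dist_setAverage_Ico_le_setIntegral_diagonalStrip hloc hint
      (div_pos hyx (Nat.cast_pos.2 (Nat.pos_of_ne_zero hn))) (by field_simp; ring)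
  exact dist_le_zero.mp
    (le_of_tendsto_of_tendsto ((hx.comp hstep).dist (hy.comp hstep)) hstrip hchain)

/-- The homogeneous Besov space `B_1(ℝ)` is trivial: any locally
integrable `u : ℝ → ℂ` with `∫∫ |u(t) − u(s)| / |t − s|² ds dt < ∞` is a.e.
equal to a constant. -/
theorem stmt9 (u : ℝ → ℂ) (hloc : LocallyIntegrable u)
    (hint : Integrable (Bker 1 u)) :
    ∃ c : ℂ, ∀ᵐ t : ℝ, u t = c := by
  have hae := ae_tendsto_setAverage_Ico hloc
  obtain ⟨x₀, hx₀⟩ := hae.exists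
  refine ⟨u x₀, ?_⟩
  filter_upwards [hae] with t ht
  rcases lt_trichotomy t x₀ with h | rfl | h
  · exact eq_of_tendsto_setAverage_Ico hloc hint h ht hx₀
  · rfl
  · exact (eq_of_tendsto_setAverage_Ico hloc hint h hx₀ ht).symm
end

section
/- Let h be a locally absolutely continuous embedding ℝ → ℂ with log h' equal a.e. to the boundary values of a holomorphic function log H' on the upper half-plane, let f : ℝ → ℝ be an increasing locally absolutely continuous homeomorphism, and set γ₀ = h∘f. If log γ₀' = iv is purely imaginary (v real) and log f' is real, then log f' and v satisfy: Re(log h')∘f = −log f' and v = Im(log h')∘f; consequently, if Im log h' = H(Re log h') for the Hilbert transform H on ℝ, then v = −P_f ∘ H ∘ P_f^{-1}(log f'), where P_f(w) = w∘f. Hence v is determined by f. -/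
open MeasureTheory

/-- Let `γ₀ = h∘f` with `log h' = A + iB` the boundary values of
a holomorphic logarithm, `f` an increasing locally absolutely continuous
homeomorphism of ℝ, and suppose `log γ₀' = iv` is purely imaginary while
`log f'` is real.  Then `A∘f = −log f'` and `v = B∘f`; consequently, if
`B = H(A)` for the Hilbert transform `H`, then
`v = −P_f ∘ H ∘ P_f^{-1}(log f')`, so `v` is determined by `f`. -/
theorem stmt17 (f finv : ℝ → ℝ) (v A B : ℝ → ℝ)
    (Hop : (ℝ → ℝ) → (ℝ → ℝ))
    (hmono : StrictMono f) (hsurj : Function.Surjective f)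
    (hli : ∀ x, finv (f x) = x) (hri : ∀ x, f (finv x) = x)
    (hdiff : ∀ x, DifferentiableAt ℝ f x) (hpos : ∀ x, 0 < deriv f x)
    -- the cocycle identity `log γ₀' = (log h')∘f + log f'` with `log γ₀' = iv`
    (hcoc : ∀ x : ℝ, Complex.I * (v x : ℂ)
        = ((A (f x) : ℂ) + Complex.I * (B (f x) : ℂ)) + (Real.log (deriv f x) : ℂ))
    -- `Im log h' = H(Re log h')` for the Hilbert transform `H`
    (hHilb : ∀ x, B x = Hop A x)
    (hHopNeg : ∀ (g : ℝ → ℝ) (x : ℝ), Hop (fun y => -g y) x = -Hop g x) :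
    (∀ x : ℝ, A (f x) = -Real.log (deriv f x)) ∧
    (∀ x : ℝ, v x = B (f x)) ∧
    (∀ x : ℝ, v x = -(Hop (fun y => Real.log (deriv f (finv y)))) (f x)) := by
  have key : ∀ x : ℝ, A (f x) = -Real.log (deriv f x) ∧ v x = B (f x) := by
    intro x
    have h := hcoc x
    have hre := congrArg Complex.re h
    have him := congrArg Complex.im h
    simp [Complex.add_re, Complex.add_im, Complex.mul_re, Complex.mul_im] at hre him
    constructor
    · linarith
    · linarith
  refine ⟨fun x => (key x).1, fun x => (key x).2, fun x => ?_⟩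
  have hA : A = fun y => -Real.log (deriv f (finv y)) := by
    funext y
    have := (key (finv y)).1
    rwa [hri] at this
  rw [(key x).2, hHilb, hA, hHopNeg]
end
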